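/- Let p, p̂ be probability vectors over a finite set of size D, K the index set of the top k entries of p, K̂ the index set of the top k entries of p̂. Then |∑_{i∈K̂} p̂_i − ∑_{i∈K} p_i| ≤ 2 ∑_{i∈K∪K̂} |p̂_i − p_i| ≤ 4k · max_{1≤i≤D} |p̂_i − p_i|. -/

import Mathlib

/-!
Write `S = ∑_{K ∪ K̂} |p̂ - p|` and split the deviation through `∑_{K̂} p`. The term
`|∑_{K̂} p̂ - ∑_{K̂} p|` is at most `S` coordinatewise. For `∑_K p - ∑_{K̂} p`, which is
nonnegative as `K` is a top set of `p`, cancel `K ∩ K̂`: the sets `K \ K̂` and `K̂ \ K` have equal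
size and, `K̂` being a top set of `p̂`, `∑_{K \ K̂} p̂ ≤ ∑_{K̂ \ K} p̂`; so swapping `p` for `p̂` on
the symmetric difference costs at most `S`. Finally `|K ∪ K̂| ≤ 2k` bounds `S` by `2k` times
the largest coordinate deviation.
-/

open Finset

variable {ι α : Type*} [AddCommGroup α] [LinearOrder α] [IsOrderedAddMonoid α]

namespace Finset

theorem sum_le_sum_of_card_eq_of_forall_le {s t : Finset ι} {f : ι → α} (hst : #s = #t)
    (h : ∀ i ∈ s, ∀ j ∈ t, f i ≤ f j) : ∑ i ∈ s, f i ≤ ∑ j ∈ t, f j := by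
  rcases t.eq_empty_or_nonempty with rfl | ht
  · simp_all
  calc ∑ i ∈ s, f i ≤ #s • t.inf' ht f :=
        sum_le_card_nsmul _ _ _ fun i hi => le_inf' ht f fun j hj => h i hi j hj
    _ = #t • t.inf' ht f := by rw [hst]
    _ ≤ ∑ j ∈ t, f j := card_nsmul_le_sum _ _ _ fun j hj => inf'_le f hj

theorem abs_sum_sub_sum_le_sum_abs_sub (s : Finset ι) (f g : ι → α) :
    |∑ i ∈ s, f i - ∑ i ∈ s, g i| ≤ ∑ i ∈ s, |f i - g i| := by
  rw [← sum_sub_distrib]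
  exact abs_sum_le_sum_abs _ _

section TopSet

variable [DecidableEq ι] {K L : Finset ι} {f g : ι → α}

theorem sum_sdiff_le_sum_sdiff_of_top (hcard : #L = #K)
    (htop : ∀ i ∈ K, ∀ j ∉ K, f j ≤ f i) : ∑ i ∈ L \ K, f i ≤ ∑ i ∈ K \ L, f i :=
  sum_le_sum_of_card_eq_of_forall_le (card_sdiff_comm hcard)
    fun j hj i hi => htop i (mem_sdiff.1 hi).1 j (mem_sdiff.1 hj).2

theorem sum_le_sum_of_top (hcard : #L = #K) (htop : ∀ i ∈ K, ∀ j ∉ K, f j ≤ f i) :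
    ∑ i ∈ L, f i ≤ ∑ i ∈ K, f i := by
  rw [← sub_nonneg, ← sum_sdiff_sub_sum_sdiff, sub_nonneg]
  exact sum_sdiff_le_sum_sdiff_of_top hcard htop

theorem abs_sum_sub_sum_le_of_top (hcard : #L = #K)
    (htopK : ∀ i ∈ K, ∀ j ∉ K, g j ≤ g i) (htopL : ∀ i ∈ L, ∀ j ∉ L, f j ≤ f i) :
    |∑ i ∈ L, g i - ∑ i ∈ K, g i| ≤ ∑ i ∈ K ∪ L, |f i - g i| := by
  rw [abs_sub_comm, abs_of_nonneg (sub_nonneg.2 (sum_le_sum_of_top hcard htopK)),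
    ← sum_sdiff_sub_sum_sdiff]
  have hswap : ∑ i ∈ K \ L, f i ≤ ∑ i ∈ L \ K, f i :=
    sum_sdiff_le_sum_sdiff_of_top hcard.symm htopL
  calc ∑ i ∈ K \ L, g i - ∑ i ∈ L \ K, g i
      ≤ ∑ i ∈ K \ L, (g i - f i) + ∑ i ∈ L \ K, (f i - g i) := by
        rw [sum_sub_distrib, sum_sub_distrib, ← sub_nonneg]
        convert sub_nonneg.2 hswap using 1
        abel
    _ ≤ ∑ i ∈ K \ L, |f i - g i| + ∑ i ∈ L \ K, |f i - g i| := by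
        gcongr with i
        · exact abs_sub_comm (f i) (g i) ▸ le_abs_self _
        · exact le_abs_self _
    _ = ∑ i ∈ (K \ L) ∪ (L \ K), |f i - g i| := (sum_union disjoint_sdiff_sdiff).symm
    _ ≤ ∑ i ∈ K ∪ L, |f i - g i| :=
        sum_le_sum_of_subset_of_nonneg (union_subset_union sdiff_subset sdiff_subset)
          fun _ _ _ => abs_nonneg _

end TopSet

end Finset

theorem stmt_8_general (D k : ℕ) (hD : 0 < D) (p phat : Fin D → ℝ)
    (K Khat : Finset (Fin D)) (hK : K.card = k) (hKhat : Khat.card = k)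
    (htopK : ∀ i ∈ K, ∀ j ∉ K, p j ≤ p i)
    (htopKhat : ∀ i ∈ Khat, ∀ j ∉ Khat, phat j ≤ phat i) :
    |∑ i ∈ Khat, phat i - ∑ i ∈ K, p i| ≤ 2 * ∑ i ∈ K ∪ Khat, |phat i - p i| ∧
      2 * ∑ i ∈ K ∪ Khat, |phat i - p i| ≤
        4 * k * (Finset.univ.sup' (univ_nonempty_iff.mpr ⟨⟨0, hD⟩⟩)
          (fun i => |phat i - p i|)) := by
  set S := ∑ i ∈ K ∪ Khat, |phat i - p i|
  set M := univ.sup' (univ_nonempty_iff.mpr ⟨⟨0, hD⟩⟩) fun i => |phat i - p i|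
  have hle_M : ∀ i, |phat i - p i| ≤ M := fun i => le_sup' (fun i => |phat i - p i|) (mem_univ i)
  have hM : 0 ≤ M := (abs_nonneg _).trans (hle_M ⟨0, hD⟩)
  constructor
  · calc |∑ i ∈ Khat, phat i - ∑ i ∈ K, p i|
        ≤ |∑ i ∈ Khat, phat i - ∑ i ∈ Khat, p i| + |∑ i ∈ Khat, p i - ∑ i ∈ K, p i| :=
          abs_sub_le _ _ _
      _ ≤ S + S := by
          gcongr
          · exact (abs_sum_sub_sum_le_sum_abs_sub _ _ _).trans
              (sum_le_sum_of_subset_of_nonneg subset_union_right fun _ _ _ => abs_nonneg _)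
          · exact abs_sum_sub_sum_le_of_top (hKhat.trans hK.symm) htopK htopKhat
      _ = 2 * S := by ring
  · have hcard : ((K ∪ Khat).card : ℝ) ≤ 2 * k := by
      exact_mod_cast (card_union_le K Khat).trans (by omega)
    calc 2 * S ≤ 2 * ((K ∪ Khat).card * M) := by
          rw [← nsmul_eq_mul]
          gcongr
          exact sum_le_card_nsmul _ _ _ fun i _ => hle_M i
      _ ≤ 2 * (2 * k * M) := by gcongr
      _ = 4 * k * M := by ring

/-- Deterministic top-`k` stability bound:
`|∑_{K̂} p̂ − ∑_K p| ≤ 2 ∑_{K∪K̂} |p̂ − p| ≤ 4 k max_i |p̂_i − p_i|`. -/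
theorem stmt_8 (D k : ℕ) (hD : 0 < D) (p phat : Fin D → ℝ)
    (hp0 : ∀ i, 0 ≤ p i) (hp1 : ∑ i, p i = 1)
    (hphat0 : ∀ i, 0 ≤ phat i) (hphat1 : ∑ i, phat i = 1)
    (K Khat : Finset (Fin D)) (hK : K.card = k) (hKhat : Khat.card = k)
    (htopK : ∀ i ∈ K, ∀ j ∉ K, p j ≤ p i)
    (htopKhat : ∀ i ∈ Khat, ∀ j ∉ Khat, phat j ≤ phat i) :
    |∑ i ∈ Khat, phat i - ∑ i ∈ K, p i| ≤ 2 * ∑ i ∈ K ∪ Khat, |phat i - p i| ∧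
      2 * ∑ i ∈ K ∪ Khat, |phat i - p i| ≤
        4 * k * (Finset.univ.sup' (univ_nonempty_iff.mpr ⟨⟨0, hD⟩⟩)
          (fun i => |phat i - p i|)) :=
  stmt_8_general D k hD p phat K Khat hK hKhat htopK htopKhat
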